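/- For every attribute c ∈ C: c belongs to every (α,β) upper distribution reduct of C (i.e., c lies in the (α,β) upper distribution core) if and only if μ_{C∖{c}} ≠ μ_C. -/

import Mathlib

/-- The indiscernibility class `[x]_R` of `x` for the attribute subset `R`:
all objects agreeing with `x` on every attribute in `R`. -/
def cls {U V A : Type*} (f : A → U → V) (R : Finset A) (x : U) : Set U :=
  {y | ∀ a ∈ R, f a x = f a y}

/-- Classical lower approximation of `X` with respect to `IND(R)`. -/
def lowerA {U V A : Type*} (f : A → U → V) (R : Finset A) (X : Set U) : Set U :=
  {x | cls f R x ⊆ X}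

/-- Classical upper approximation of `X` with respect to `IND(R)`. -/
def upperA {U V A : Type*} (f : A → U → V) (R : Finset A) (X : Set U) : Set U :=
  {x | (cls f R x ∩ X).Nonempty}

/-- α-probabilistic lower approximation: `{x | |[x]_R ∩ X| ≥ α·|[x]_R|}`. -/
noncomputable def aprLow {U V A : Type*} (f : A → U → V) (R : Finset A) (α : ℝ)
    (X : Set U) : Set U :=
  {x | α * ((cls f R x).ncard : ℝ) ≤ (((cls f R x) ∩ X).ncard : ℝ)}

/-- β-probabilistic upper approximation: `{x | |[x]_R ∩ X| > β·|[x]_R|}`. -/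
noncomputable def aprUp {U V A : Type*} (f : A → U → V) (R : Finset A) (β : ℝ)
    (X : Set U) : Set U :=
  {x | β * ((cls f R x).ncard : ℝ) < (((cls f R x) ∩ X).ncard : ℝ)}

/-- `η_R = (Σ_{i=1}^M |lower_R(apr_C^α(Y_i))|)/(|U|·M)`, the sum running over the
decision classes `Y_i = d⁻¹(v)`, `v ∈ d(U)`. -/
noncomputable def eta {U V A : Type*} [Fintype U] [DecidableEq V] (f : A → U → V)
    (C : Finset A) (d : U → V) (α : ℝ) (R : Finset A) : ℝ :=
  (∑ v ∈ Finset.univ.image d,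
      ((lowerA f R (aprLow f C α (d ⁻¹' {v}))).ncard : ℝ)) /
    ((Fintype.card U : ℝ) * ((Finset.univ.image d).card : ℝ))

/-- `μ_R = (Σ_{i=1}^M |upper_R(Apr_C^β(Y_i))|)/(|U|·M)`, the sum running over the
decision classes `Y_i = d⁻¹(v)`, `v ∈ d(U)`. -/
noncomputable def mu {U V A : Type*} [Fintype U] [DecidableEq V] (f : A → U → V)
    (C : Finset A) (d : U → V) (β : ℝ) (R : Finset A) : ℝ :=
  (∑ v ∈ Finset.univ.image d,
      ((upperA f R (aprUp f C β (d ⁻¹' {v}))).ncard : ℝ)) /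
    ((Fintype.card U : ℝ) * ((Finset.univ.image d).card : ℝ))

/-- `R` is an (α,β) lower distribution consistent set:
`apr_R^α(Y_i) = apr_C^α(Y_i)` for every decision class `Y_i`. -/
def LowerConsistent {U V A : Type*} [Fintype U] [DecidableEq V] (f : A → U → V)
    (C : Finset A) (d : U → V) (α : ℝ) (R : Finset A) : Prop :=
  ∀ v ∈ Finset.univ.image d, aprLow f R α (d ⁻¹' {v}) = aprLow f C α (d ⁻¹' {v})

/-- `R` is an (α,β) upper distribution consistent set:
`Apr_R^β(Y_i) = Apr_C^β(Y_i)` for every decision class `Y_i`. -/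
def UpperConsistent {U V A : Type*} [Fintype U] [DecidableEq V] (f : A → U → V)
    (C : Finset A) (d : U → V) (β : ℝ) (R : Finset A) : Prop :=
  ∀ v ∈ Finset.univ.image d, aprUp f R β (d ⁻¹' {v}) = aprUp f C β (d ⁻¹' {v})

/-- `R` is an (α,β) lower distribution reduct: a lower distribution consistent set
no proper subset of which is lower distribution consistent. -/
def LowerReduct {U V A : Type*} [Fintype U] [DecidableEq V] (f : A → U → V)
    (C : Finset A) (d : U → V) (α : ℝ) (R : Finset A) : Prop :=
  LowerConsistent f C d α R ∧ ∀ R' ⊂ R, ¬ LowerConsistent f C d α R'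

/-- `R` is an (α,β) upper distribution reduct: an upper distribution consistent set
no proper subset of which is upper distribution consistent. -/
def UpperReduct {U V A : Type*} [Fintype U] [DecidableEq V] (f : A → U → V)
    (C : Finset A) (d : U → V) (β : ℝ) (R : Finset A) : Prop :=
  UpperConsistent f C d β R ∧ ∀ R' ⊂ R, ¬ UpperConsistent f C d β R'

/-! For `R ⊆ C` every `IND(R)`-class is a union of `IND(C)`-classes, and the proportion of `Y`
in it is a weighted average of the proportions in those classes. Hence
`lower_R(Apr_C^β Y) ⊆ Apr_R^β Y ⊆ upper_R(Apr_C^β Y)`, so `R` is upper distribution consistent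
iff `upper_R(Apr_C^β Y_i) = Apr_C^β Y_i` for every `i`; since `upper_R` only enlarges sets, this
is exactly `μ_R = μ_C`. Consistency passes to supersets inside `C` and every consistent set
contains a reduct, so `c` lies in every reduct iff `C ∖ {c}` is not consistent. -/

section Classes

variable {U V A : Type*} {f : A → U → V}

theorem mem_cls_self (f : A → U → V) (R : Finset A) (x : U) : x ∈ cls f R x :=
  fun _ _ => rfl

theorem mem_cls_comm {R : Finset A} {x y : U} : y ∈ cls f R x ↔ x ∈ cls f R y :=
  ⟨fun h a ha => (h a ha).symm, fun h a ha => (h a ha).symm⟩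

theorem cls_eq_of_mem {R : Finset A} {x y : U} (h : y ∈ cls f R x) :
    cls f R y = cls f R x := by
  ext z
  exact ⟨fun hz a ha => (h a ha).trans (hz a ha), fun hz a ha => (h a ha).symm.trans (hz a ha)⟩

theorem cls_subset_cls {R S : Finset A} (h : R ⊆ S) (x : U) : cls f S x ⊆ cls f R x :=
  fun _ hy a ha => hy a (h ha)

theorem subset_upperA (R : Finset A) (X : Set U) : X ⊆ upperA f R X :=
  fun x hx => ⟨x, mem_cls_self f R x, hx⟩

theorem upperA_subset_upperA {R S : Finset A} (h : R ⊆ S) (X : Set U) :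
    upperA f S X ⊆ upperA f R X := by
  rintro x ⟨y, hy, hyX⟩
  exact ⟨y, cls_subset_cls h x hy, hyX⟩

theorem subset_lowerA_of_upperA_subset {R : Finset A} {X : Set U} (h : upperA f R X ⊆ X) :
    X ⊆ lowerA f R X :=
  fun _ hx _ hy => h ⟨_, mem_cls_comm.mp hy, hx⟩

theorem upperA_aprUp_subset (R : Finset A) (β : ℝ) (Y : Set U) :
    upperA f R (aprUp f R β Y) ⊆ aprUp f R β Y := by
  rintro x ⟨y, hy, hyY⟩
  rwa [aprUp, Set.mem_ofPred_eq, ← cls_eq_of_mem hy]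

theorem cls_subset_of_mem_cls {R C : Finset A} (hRC : R ⊆ C) {x y : U} (hy : y ∈ cls f R x) :
    cls f C y ⊆ cls f R x :=
  cls_eq_of_mem hy ▸ cls_subset_cls hRC y

end Classes

section Counting

open Classical

variable {U V A : Type*} [Fintype U] {f : A → U → V}

theorem ncard_inter_eq_sum_classes {C : Finset A} {T : Set U} (hT : ∀ y ∈ T, cls f C y ⊆ T)
    (S : Set U) :
    (T ∩ S).ncard = ∑ K ∈ T.toFinset.image (cls f C), (K ∩ S).ncard := by
  rw [Set.ncard_eq_toFinset_card', Finset.card_eq_sum_card_fiberwise (f := cls f C)]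
  · refine Finset.sum_congr rfl ?_
    simp only [Finset.mem_image, Set.mem_toFinset]
    rintro _ ⟨y, hy, rfl⟩
    rw [Set.ncard_eq_toFinset_card']
    congr 1
    ext z
    simp only [Finset.mem_filter, Set.mem_toFinset, Set.mem_inter_iff]
    constructor
    · rintro ⟨⟨-, hzS⟩, hzy⟩
      exact ⟨hzy ▸ mem_cls_self f C z, hzS⟩
    · rintro ⟨hzy, hzS⟩
      exact ⟨⟨hT y hy hzy, hzS⟩, cls_eq_of_mem hzy⟩
  · intro x hx
    simp only [Finset.coe_image, Set.coe_toFinset]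
    exact ⟨x, (Set.mem_toFinset.mp hx).1, rfl⟩

theorem ncard_eq_sum_classes {C : Finset A} {T : Set U} (hT : ∀ y ∈ T, cls f C y ⊆ T) :
    T.ncard = ∑ K ∈ T.toFinset.image (cls f C), K.ncard := by
  simpa using ncard_inter_eq_sum_classes hT Set.univ

theorem exists_mem_aprUp_of_lt {C : Finset A} {T : Set U} (hT : ∀ y ∈ T, cls f C y ⊆ T)
    {β : ℝ} {Y : Set U} (h : β * (T.ncard : ℝ) < ((T ∩ Y).ncard : ℝ)) :
    ∃ y ∈ T, y ∈ aprUp f C β Y := by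
  rw [ncard_eq_sum_classes hT, ncard_inter_eq_sum_classes hT, Nat.cast_sum, Nat.cast_sum,
    Finset.mul_sum] at h
  obtain ⟨_, hK, hlt⟩ := Finset.exists_lt_of_sum_lt h
  obtain ⟨y, hy, rfl⟩ := Finset.mem_image.mp hK
  exact ⟨y, Set.mem_toFinset.mp hy, hlt⟩

theorem lt_of_forall_mem_aprUp {C : Finset A} {T : Set U} (hT : ∀ y ∈ T, cls f C y ⊆ T)
    (hne : T.Nonempty) {β : ℝ} {Y : Set U} (h : ∀ y ∈ T, y ∈ aprUp f C β Y) :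
    β * (T.ncard : ℝ) < ((T ∩ Y).ncard : ℝ) := by
  rw [ncard_eq_sum_classes hT, ncard_inter_eq_sum_classes hT, Nat.cast_sum, Nat.cast_sum,
    Finset.mul_sum]
  refine Finset.sum_lt_sum_of_nonempty (Set.toFinset_nonempty.mpr hne |>.image _) ?_
  simp only [Finset.mem_image, Set.mem_toFinset]
  rintro _ ⟨y, hy, rfl⟩
  exact h y hy

theorem aprUp_subset_upperA_aprUp {R C : Finset A} (hRC : R ⊆ C) (β : ℝ) (Y : Set U) :
    aprUp f R β Y ⊆ upperA f R (aprUp f C β Y) := fun _ hx =>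
  exists_mem_aprUp_of_lt (fun _ => cls_subset_of_mem_cls hRC) hx

theorem lowerA_aprUp_subset_aprUp {R C : Finset A} (hRC : R ⊆ C) (β : ℝ) (Y : Set U) :
    lowerA f R (aprUp f C β Y) ⊆ aprUp f R β Y := fun x hx =>
  lt_of_forall_mem_aprUp (fun _ => cls_subset_of_mem_cls hRC) ⟨x, mem_cls_self f R x⟩ hx

end Counting

section Consistency

variable {U V A : Type*} [Fintype U] {f : A → U → V}

theorem aprUp_eq_iff_upperA_eq {R C : Finset A} (hRC : R ⊆ C) (β : ℝ) (Y : Set U) :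
    aprUp f R β Y = aprUp f C β Y ↔ upperA f R (aprUp f C β Y) = aprUp f C β Y := by
  constructor
  · intro h
    refine (subset_upperA R _).antisymm' ?_
    rw [← h]
    exact upperA_aprUp_subset R β Y
  · intro h
    have hlower := subset_lowerA_of_upperA_subset h.le
    exact (aprUp_subset_upperA_aprUp hRC β Y).trans h.le |>.antisymm
      (hlower.trans (lowerA_aprUp_subset_aprUp hRC β Y))

variable [DecidableEq V] {C : Finset A} {d : U → V} {β : ℝ}

theorem upperConsistent_iff {R : Finset A} (hRC : R ⊆ C) :
    UpperConsistent f C d β R ↔ ∀ v ∈ Finset.univ.image d,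
      upperA f R (aprUp f C β (d ⁻¹' {v})) = aprUp f C β (d ⁻¹' {v}) :=
  forall₂_congr fun _ _ => aprUp_eq_iff_upperA_eq hRC β _

theorem UpperConsistent.mono {R R' : Finset A} (hRR' : R ⊆ R') (hR'C : R' ⊆ C)
    (h : UpperConsistent f C d β R) : UpperConsistent f C d β R' := by
  rw [upperConsistent_iff (hRR'.trans hR'C)] at h
  rw [upperConsistent_iff hR'C]
  intro v hv
  exact (subset_upperA R' _).antisymm' ((upperA_subset_upperA hRR' _).trans (h v hv).le)

theorem mu_eq_mu_iff [Nonempty U] {R : Finset A} :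
    mu f C d β R = mu f C d β C ↔ ∀ v ∈ Finset.univ.image d,
      upperA f R (aprUp f C β (d ⁻¹' {v})) = aprUp f C β (d ⁻¹' {v}) := by
  have hC : ∀ v, upperA f C (aprUp f C β (d ⁻¹' {v})) = aprUp f C β (d ⁻¹' {v}) :=
    fun v => (aprUp_eq_iff_upperA_eq subset_rfl β _).mp rfl
  have hM : (0 : ℝ) < (Finset.univ.image d).card :=
    Nat.cast_pos.mpr (Finset.univ_nonempty.image d).card_pos
  have hU : (0 : ℝ) < Fintype.card U := Nat.cast_pos.mpr Fintype.card_pos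
  rw [mu, mu, div_left_inj' (by positivity), eq_comm,
    Finset.sum_eq_sum_iff_of_le fun v _ => by
      rw [hC]; exact_mod_cast Set.ncard_le_ncard (subset_upperA R _)]
  refine forall₂_congr fun v _ => ?_
  rw [hC, Nat.cast_inj, eq_comm]
  exact ⟨fun h => (Set.eq_of_subset_of_ncard_le (subset_upperA R _) h.le).symm,
    congrArg Set.ncard⟩

theorem upperConsistent_iff_mu_eq [Nonempty U] {R : Finset A} (hRC : R ⊆ C) :
    UpperConsistent f C d β R ↔ mu f C d β R = mu f C d β C := by
  rw [upperConsistent_iff hRC, mu_eq_mu_iff]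

theorem upperReduct_iff_minimal {R : Finset A} :
    UpperReduct f C d β R ↔ Minimal (UpperConsistent f C d β) R :=
  minimal_iff_forall_lt.symm

theorem UpperConsistent.exists_upperReduct_subset {R : Finset A}
    (h : UpperConsistent f C d β R) : ∃ R' ⊆ R, UpperReduct f C d β R' := by
  simp only [upperReduct_iff_minimal]
  exact exists_minimal_le_of_wellFoundedLT _ R h

end Consistency

theorem mem_upper_core_iff_general {U V A : Type*} [Fintype U] [Nonempty U]
    [DecidableEq V] [DecidableEq A] (f : A → U → V) (C : Finset A) (d : U → V)
    (β : ℝ) (c : A) :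
    (∀ R ⊆ C, UpperReduct f C d β R → c ∈ R) ↔
      mu f C d β (C.erase c) ≠ mu f C d β C := by
  have hconsistent := upperConsistent_iff_mu_eq (f := f) (d := d) (β := β)
    (Finset.erase_subset c C)
  constructor
  · intro hcore heq
    obtain ⟨R, hR, hred⟩ := (hconsistent.mpr heq).exists_upperReduct_subset
    exact Finset.notMem_erase c C (hR (hcore R (hR.trans (Finset.erase_subset c C)) hred))
  · intro hne R hRC hred
    by_contra hcR
    exact hne (hconsistent.mp
      (hred.1.mono (Finset.subset_erase.mpr ⟨hRC, hcR⟩) (Finset.erase_subset c C)))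

theorem mem_upper_core_iff {U V A : Type*} [Fintype U] [Nonempty U]
    [DecidableEq V] [DecidableEq A] (f : A → U → V) (C : Finset A) (d : U → V)
    (α β : ℝ) (hβ0 : 0 ≤ β) (hβα : β < α) (hα1 : α ≤ 1)
    (c : A) (hc : c ∈ C) :
    (∀ R ⊆ C, UpperReduct f C d β R → c ∈ R) ↔
      mu f C d β (C.erase c) ≠ mu f C d β C :=
  mem_upper_core_iff_general f C d β c
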